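/- (Lemma 3.1(ii), d = 3.) Let Ω ⊆ ℝ³ be a bounded open set with 0 ∉ closure(Ω), r > 0, T the inversion in the sphere of radius r centered at the origin, σ the 2-dimensional Hausdorff measure restricted to ∂Ω, and σ* the 2-dimensional Hausdorff measure restricted to ∂Ω* := T(∂Ω). Let ν : ℝ³ → ℝ³ be any map, and define ν*(T x) := R_x ν(x) on ∂Ω*, where R_x = I − 2(x/|x|)(x/|x|)ᵗ. Let φ : ℝ³ → ℝ be bounded Borel measurable with σ(∂Ω) < ∞ and define φ*(T y) := φ(y)|y|³/r³. Then for every x ∈ ∂Ω such that y ↦ Γ(x−y)φ(y) and y ↦ ⟨ν(x), ∇Γ(x−y)⟩φ(y) are σ-integrable, ∫_{∂Ω*} ⟨ν*(Tx), ∇Γ(Tx − z)⟩ φ*(z) dσ*(z) = (|x|³/r³) ∫_{∂Ω} ⟨ν(x), ∇Γ(x − y)⟩ φ(y) dσ(y) + (|x| ⟨x, ν(x)⟩ / r³) ∫_{∂Ω} Γ(x − y) φ(y) dσ(y), where Γ(z) = −1/(4π|z|) and ∇Γ(z) = z/(4π|z|³). -/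

import Mathlib

/-!
Inversion `T` in the sphere of radius `R` about `c` is conformal with factor `(R / |y - c|)²`,
so it scales `d`-dimensional Hausdorff measure by `(R / |y - c|)^(2d)`. On an annulus
`b ≤ |y - c| ≤ t b` the map `T` is Lipschitz with constant `(R / b)²` and its inverse (`T`
itself) with constant `(t b / R)²`; cutting a set into such annuli and letting `t → 1` gives
`μH[d] (T '' S) = ∫⁻ y in S, (R / |y - c|)^(2d) ∂μH[d]`. Changing variables in the integral over
`∂Ω*` then reduces the theorem to the pointwise identity
`⟪R_x v, ∇Γ(Tx - Ty)⟫ = (|x|³|y|/r⁴) (⟪v, ∇Γ(x - y)⟫ + ⟪x, v⟫/|x|² Γ(x - y))`,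
a consequence of `|Tx - Ty| = r² |x - y| / (|x| |y|)`.
-/

open MeasureTheory EuclideanGeometry Set Filter Topology Function
open scoped Real RealInnerProductSpace ENNReal

theorem ENNReal.le_of_forall_one_lt_le_ofReal_sq_rpow_mul {x y : ℝ≥0∞} {d : ℝ}
    (h : ∀ t : ℝ, 1 < t → x ≤ ENNReal.ofReal (t ^ 2) ^ d * y) : x ≤ y := by
  have hcont : Continuous fun t : ℝ => ENNReal.ofReal (t ^ 2) ^ d :=
    ENNReal.continuous_rpow_const.comp (ENNReal.continuous_ofReal.comp (continuous_pow 2))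
  have hlim : Tendsto (fun t : ℝ => ENNReal.ofReal (t ^ 2) ^ d * y) (𝓝[>] 1) (𝓝 y) := by
    simpa using ENNReal.Tendsto.mul_const ((hcont.tendsto 1).mono_left nhdsWithin_le_nhds)
      (Or.inl (by simp))
  exact ge_of_tendsto hlim (eventually_nhdsWithin_of_forall h)

namespace EuclideanGeometry

variable {V P : Type*} [NormedAddCommGroup V] [InnerProductSpace ℝ V] [MetricSpace P]
  [NormedAddTorsor V P] {c : P} {R b B d : ℝ} {s : Set P}

theorem lipschitzOnWith_inversion (hb : 0 < b) :
    LipschitzOnWith (Real.toNNReal ((R / b) ^ 2)) (inversion c R) {y | b ≤ dist y c} := by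
  refine LipschitzOnWith.of_dist_le_mul fun x (hx : b ≤ dist x c) y (hy : b ≤ dist y c) => ?_
  rw [dist_inversion_inversion (dist_pos.1 (hb.trans_le hx)) (dist_pos.1 (hb.trans_le hy)),
    Real.coe_toNNReal _ (sq_nonneg _), div_pow]
  gcongr
  nlinarith

/-- `(R / dist y c) ^ 2` is the conformal factor of `inversion c R` at `y`, so this is its
`d`-dimensional Jacobian. -/
noncomputable def inversionJacobian (c : P) (R d : ℝ) (y : P) : ℝ≥0∞ :=
  ENNReal.ofReal ((R / dist y c) ^ 2) ^ d

theorem inversionJacobian_le {y : P} (hd : 0 ≤ d) (hb : 0 < b) (hy : b ≤ dist y c) :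
    inversionJacobian c R d y ≤ ENNReal.ofReal ((R / b) ^ 2) ^ d :=
  ENNReal.rpow_le_rpow (ENNReal.ofReal_le_ofReal (by rw [div_pow, div_pow]; gcongr)) hd

theorem le_inversionJacobian {y : P} (hd : 0 ≤ d) (hy₀ : 0 < dist y c) (hy : dist y c ≤ B) :
    ENNReal.ofReal ((R / B) ^ 2) ^ d ≤ inversionJacobian c R d y :=
  ENNReal.rpow_le_rpow (ENNReal.ofReal_le_ofReal (by rw [div_pow, div_pow]; gcongr)) hd

variable [MeasurableSpace P] [BorelSpace P]

theorem measurable_inversion (c : P) (R : ℝ) : Measurable (inversion c R) :=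
  measurable_of_continuousOn_compl_singleton c fun _ hx =>
    (continuousAt_const.inversion continuousAt_const continuousAt_id hx).continuousWithinAt

theorem measurableEmbedding_inversion (c : P) (hR : R ≠ 0) :
    MeasurableEmbedding (inversion c R) :=
  .of_measurable_inverse (measurable_inversion c R)
    ((inversion_surjective c hR).range_eq ▸ MeasurableSet.univ) (measurable_inversion c R)
    (inversion_involutive c hR)

theorem measurable_inversionJacobian : Measurable (inversionJacobian c R d) := by
  unfold inversionJacobian; fun_prop

theorem hausdorffMeasure_inversion_image_le (hd : 0 ≤ d) (hb : 0 < b)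
    (hs : ∀ y ∈ s, b ≤ dist y c) :
    μH[d] (inversion c R '' s) ≤ ENNReal.ofReal ((R / b) ^ 2) ^ d * μH[d] s :=
  ((lipschitzOnWith_inversion hb).mono hs).hausdorffMeasure_image_le hd

theorem hausdorffMeasure_le_inversion_image (hR : R ≠ 0) (hd : 0 ≤ d) (hB : 0 < B)
    (hs : ∀ y ∈ s, 0 < dist y c ∧ dist y c ≤ B) :
    μH[d] s ≤ ENNReal.ofReal ((B / R) ^ 2) ^ d * μH[d] (inversion c R '' s) := by
  have hfar : ∀ z ∈ inversion c R '' s, R ^ 2 / B ≤ dist z c := by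
    rintro _ ⟨y, hy, rfl⟩
    rw [dist_inversion_center]
    exact div_le_div_of_nonneg_left (sq_nonneg R) (hs y hy).1 (hs y hy).2
  have := hausdorffMeasure_inversion_image_le (R := R) hd (by positivity) hfar
  simp only [image_image, inversion_inversion c hR, image_id'] at this
  rwa [show R / (R ^ 2 / B) = B / R by field_simp] at this

theorem hausdorffMeasure_inversion_image_le_lintegral {t : ℝ} (hd : 0 ≤ d) (hb : 0 < b)
    (ht : 0 < t) (hs : ∀ y ∈ s, b ≤ dist y c ∧ dist y c ≤ t * b) :
    μH[d] (inversion c R '' s) ≤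
      ENNReal.ofReal (t ^ 2) ^ d * ∫⁻ y in s, inversionJacobian c R d y ∂μH[d] :=
  calc μH[d] (inversion c R '' s)
      ≤ ENNReal.ofReal ((R / b) ^ 2) ^ d * μH[d] s :=
        hausdorffMeasure_inversion_image_le hd hb fun y hy => (hs y hy).1
    _ = ENNReal.ofReal (t ^ 2) ^ d * (ENNReal.ofReal ((R / (t * b)) ^ 2) ^ d * μH[d] s) := by
        rw [← mul_assoc, ← ENNReal.mul_rpow_of_nonneg _ _ hd,
          ← ENNReal.ofReal_mul (sq_nonneg t)]
        congr 3
        field_simp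
    _ ≤ ENNReal.ofReal (t ^ 2) ^ d * ∫⁻ y in s, inversionJacobian c R d y ∂μH[d] := by
        gcongr
        rw [← setLIntegral_const]
        exact setLIntegral_mono measurable_inversionJacobian fun y hy =>
          le_inversionJacobian hd (hb.trans_le (hs y hy).1) (hs y hy).2

theorem lintegral_inversionJacobian_le_hausdorffMeasure_image {t : ℝ} (hR : R ≠ 0)
    (hd : 0 ≤ d) (hb : 0 < b) (ht : 0 < t) (hs : ∀ y ∈ s, b ≤ dist y c ∧ dist y c ≤ t * b) :
    ∫⁻ y in s, inversionJacobian c R d y ∂μH[d] ≤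
      ENNReal.ofReal (t ^ 2) ^ d * μH[d] (inversion c R '' s) :=
  calc ∫⁻ y in s, inversionJacobian c R d y ∂μH[d]
      ≤ ∫⁻ _ in s, ENNReal.ofReal ((R / b) ^ 2) ^ d ∂μH[d] :=
        setLIntegral_mono measurable_const fun y hy => inversionJacobian_le hd hb (hs y hy).1
    _ = ENNReal.ofReal ((R / b) ^ 2) ^ d * μH[d] s := setLIntegral_const _ _
    _ ≤ ENNReal.ofReal ((R / b) ^ 2) ^ d *
          (ENNReal.ofReal ((t * b / R) ^ 2) ^ d * μH[d] (inversion c R '' s)) := by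
        gcongr
        exact hausdorffMeasure_le_inversion_image hR hd (by positivity) fun y hy =>
          ⟨hb.trans_le (hs y hy).1, (hs y hy).2⟩
    _ = ENNReal.ofReal (t ^ 2) ^ d * μH[d] (inversion c R '' s) := by
        rw [← mul_assoc, ← ENNReal.mul_rpow_of_nonneg _ _ hd,
          ← ENNReal.ofReal_mul (sq_nonneg _)]
        congr 3
        field_simp

theorem exists_partition_annuli {t : ℝ} (ht : 1 < t) (hs : MeasurableSet s) (hc : c ∉ s) :
    ∃ A : ℤ → Set P, (∀ k, MeasurableSet (A k)) ∧ Pairwise (Disjoint on A) ∧ ⋃ k, A k = s ∧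
      ∀ k, ∃ b > 0, ∀ y ∈ A k, b ≤ dist y c ∧ dist y c ≤ t * b := by
  have hdist : Measurable fun y => dist y c := (continuous_id.dist continuous_const).measurable
  have hdisj : Pairwise (Disjoint on fun k : ℤ => Ico (t ^ k) (t ^ (k + 1))) := by
    simpa [Order.succ_eq_add_one] using (zpow_right_mono₀ ht.le).pairwise_disjoint_on_Ico_succ
  refine ⟨fun k => s ∩ (dist · c) ⁻¹' Ico (t ^ k) (t ^ (k + 1)),
    fun k => hs.inter (hdist measurableSet_Ico),
    fun i j hij => ((hdisj hij).preimage _).inter_left' s |>.inter_right' s, ?_,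
    fun k => ⟨t ^ k, zpow_pos (one_pos.trans ht) k, fun y hy => ⟨hy.2.1, ?_⟩⟩⟩
  · refine (iUnion_subset fun k => inter_subset_left).antisymm fun y hy => ?_
    have hy₀ : 0 < dist y c := dist_pos.2 fun h => hc (h ▸ hy)
    obtain ⟨k, hk⟩ := exists_mem_Ico_zpow hy₀ ht
    exact mem_iUnion.2 ⟨k, hy, hk⟩
  · rw [mul_comm, ← zpow_add_one₀ (one_pos.trans ht).ne']
    exact hy.2.2.le

theorem hausdorffMeasure_inversion_image (hR : R ≠ 0) (hd : 0 ≤ d) (hs : MeasurableSet s)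
    (hc : c ∉ s) :
    μH[d] (inversion c R '' s) = ∫⁻ y in s, inversionJacobian c R d y ∂μH[d] := by
  suffices h : ∀ t : ℝ, 1 < t →
      μH[d] (inversion c R '' s) ≤
        ENNReal.ofReal (t ^ 2) ^ d * ∫⁻ y in s, inversionJacobian c R d y ∂μH[d] ∧
      ∫⁻ y in s, inversionJacobian c R d y ∂μH[d] ≤
        ENNReal.ofReal (t ^ 2) ^ d * μH[d] (inversion c R '' s) from
    le_antisymm (ENNReal.le_of_forall_one_lt_le_ofReal_sq_rpow_mul fun t ht => (h t ht).1)
      (ENNReal.le_of_forall_one_lt_le_ofReal_sq_rpow_mul fun t ht => (h t ht).2)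
  intro t ht
  obtain ⟨A, hA, hdisj, rfl, hbound⟩ := exists_partition_annuli ht hs hc
  have himage : μH[d] (inversion c R '' ⋃ k, A k) = ∑' k, μH[d] (inversion c R '' A k) := by
    rw [image_iUnion]
    exact measure_iUnion
      (fun i j hij => (disjoint_image_iff (inversion_injective c hR)).2 (hdisj hij))
      fun k => (measurableEmbedding_inversion c hR).measurableSet_image.2 (hA k)
  rw [himage, lintegral_iUnion hA hdisj, ← ENNReal.tsum_mul_left, ← ENNReal.tsum_mul_left]
  refine ⟨ENNReal.tsum_le_tsum fun k => ?_, ENNReal.tsum_le_tsum fun k => ?_⟩ <;>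
    obtain ⟨b, hb, hAk⟩ := hbound k
  · exact hausdorffMeasure_inversion_image_le_lintegral hd hb (one_pos.trans ht) hAk
  · exact lintegral_inversionJacobian_le_hausdorffMeasure_image hR hd hb (one_pos.trans ht) hAk

theorem setIntegral_inversion_image {E : Type*} [NormedAddCommGroup E] [NormedSpace ℝ E]
    (hR : R ≠ 0) (hd : 0 ≤ d) (hs : MeasurableSet s) (hc : c ∉ s) (g : P → E) :
    ∫ z in inversion c R '' s, g z ∂μH[d] =
      ∫ y in s, ((R / dist y c) ^ 2) ^ d • g (inversion c R y) ∂μH[d] := by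
  have hmeas := measurable_inversion (P := P) c R
  have hmap : μH[d].restrict (inversion c R '' s) =
      ((μH[d].restrict s).withDensity (inversionJacobian c R d)).map (inversion c R) := by
    ext B hB
    rw [Measure.map_apply hmeas hB, withDensity_apply _ (hmeas hB),
      Measure.restrict_restrict (hmeas hB), Measure.restrict_apply hB,
      ← hausdorffMeasure_inversion_image hR hd ((hmeas hB).inter hs) fun h => hc h.2,
      inter_comm (inversion c R ⁻¹' B), image_inter_preimage, inter_comm]
  rw [hmap, (measurableEmbedding_inversion c hR).integral_map,
    integral_withDensity_eq_integral_toReal_smul measurable_inversionJacobian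
      (ae_of_all _ fun y => ENNReal.rpow_lt_top_of_nonneg hd ENNReal.ofReal_ne_top)]
  simp only [inversionJacobian, ← ENNReal.toReal_rpow, ENNReal.toReal_ofReal (sq_nonneg _)]

end EuclideanGeometry

section Kernel

variable {V : Type*} [NormedAddCommGroup V] [InnerProductSpace ℝ V] {r : ℝ} {x y : V}

/-- The paper's `Γ`; its gradient `∇Γ` is `newtonKernelGrad`. -/
noncomputable def newtonKernel (z : V) : ℝ := -1 / (4 * π * ‖z‖)

noncomputable def newtonKernelGrad (z : V) : V := (4 * π * ‖z‖ ^ 3)⁻¹ • z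

theorem inversion_zero_eq_smul (r : ℝ) (x : V) : inversion (0 : V) r x = (r / ‖x‖) ^ 2 • x := by
  simp [inversion]

theorem norm_inversion_zero_sub (hx : x ≠ 0) (hy : y ≠ 0) :
    ‖inversion (0 : V) r x - inversion 0 r y‖ = r ^ 2 / (‖x‖ * ‖y‖) * ‖x - y‖ := by
  simpa only [dist_eq_norm, sub_zero] using dist_inversion_inversion hx hy r

theorem inner_reflection_inversion_zero_sub (hx : x ≠ 0) (hy : y ≠ 0) (v : V) :
    ⟪v - (2 * ⟪x, v⟫ / ‖x‖ ^ 2) • x, inversion 0 r x - inversion 0 r y⟫ =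
      (r / ‖y‖) ^ 2 * (⟪v, x - y⟫ - ⟪x, v⟫ * ‖x - y‖ ^ 2 / ‖x‖ ^ 2) := by
  have hx' : ‖x‖ ≠ 0 := norm_ne_zero_iff.2 hx
  have hy' : ‖y‖ ≠ 0 := norm_ne_zero_iff.2 hy
  simp only [inversion_zero_eq_smul, inner_sub_left, inner_sub_right, real_inner_smul_left,
    real_inner_smul_right, real_inner_self_eq_norm_sq, real_inner_comm v x, norm_sub_sq_real]
  field_simp
  ring

theorem inner_reflection_newtonKernelGrad_inversion (hr : r ≠ 0) (hx : x ≠ 0) (hy : y ≠ 0)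
    (v : V) :
    ⟪v - (2 * ⟪x, v⟫ / ‖x‖ ^ 2) • x, newtonKernelGrad (inversion 0 r x - inversion 0 r y)⟫ =
      ‖x‖ ^ 3 * ‖y‖ / r ^ 4 *
        (⟪v, newtonKernelGrad (x - y)⟫ + ⟪x, v⟫ / ‖x‖ ^ 2 * newtonKernel (x - y)) := by
  rcases eq_or_ne x y with rfl | hxy
  · simp [newtonKernelGrad, newtonKernel]
  have hx' : ‖x‖ ≠ 0 := norm_ne_zero_iff.2 hx
  have hy' : ‖y‖ ≠ 0 := norm_ne_zero_iff.2 hy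
  have hxy' : ‖x - y‖ ≠ 0 := norm_ne_zero_iff.2 (sub_ne_zero.2 hxy)
  simp only [newtonKernelGrad, newtonKernel, real_inner_smul_right,
    inner_reflection_inversion_zero_sub hx hy, norm_inversion_zero_sub hx hy]
  field_simp
  ring

theorem inner_reflection_newtonKernelGrad_inversion_mul_density (hr : r ≠ 0) (hx : x ≠ 0)
    (hy : y ≠ 0) (v : V) (p : ℝ) :
    ((r / ‖y‖) ^ 2) ^ 2 * (⟪v - (2 * ⟪x, v⟫ / ‖x‖ ^ 2) • x,
        newtonKernelGrad (inversion 0 r x - inversion 0 r y)⟫ * (p * ‖y‖ ^ 3 / r ^ 3)) =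
      ‖x‖ ^ 3 / r ^ 3 * (⟪v, newtonKernelGrad (x - y)⟫ * p) +
        ‖x‖ * ⟪x, v⟫ / r ^ 3 * (newtonKernel (x - y) * p) := by
  have hx' : ‖x‖ ≠ 0 := norm_ne_zero_iff.2 hx
  have hy' : ‖y‖ ≠ 0 := norm_ne_zero_iff.2 hy
  rw [inner_reflection_newtonKernelGrad_inversion hr hx hy]
  field_simp

end Kernel

theorem np_inversion_exterior_dim3_general
    (r : ℝ) (hr : 0 < r) (Ω : Set (EuclideanSpace ℝ (Fin 3)))
    (h0 : (0 : EuclideanSpace ℝ (Fin 3)) ∉ closure Ω)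
    (T : EuclideanSpace ℝ (Fin 3) → EuclideanSpace ℝ (Fin 3))
    (hT : ∀ x : EuclideanSpace ℝ (Fin 3), x ≠ 0 → T x = (r ^ 2 / ‖x‖ ^ 2) • x)
    (σ σs : Measure (EuclideanSpace ℝ (Fin 3)))
    (hσ : σ = μH[2].restrict (frontier Ω))
    (hσs : σs = μH[2].restrict (T '' frontier Ω))
    (R : EuclideanSpace ℝ (Fin 3) → EuclideanSpace ℝ (Fin 3) → EuclideanSpace ℝ (Fin 3))
    (hR : ∀ x v : EuclideanSpace ℝ (Fin 3), x ≠ 0 →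
      R x v = v - (2 * ⟪x, v⟫ / ‖x‖ ^ 2) • x)
    (ν νs : EuclideanSpace ℝ (Fin 3) → EuclideanSpace ℝ (Fin 3))
    (hνs : ∀ x ∈ frontier Ω, νs (T x) = R x (ν x))
    (φ : EuclideanSpace ℝ (Fin 3) → ℝ)
    (φs : EuclideanSpace ℝ (Fin 3) → ℝ)
    (hφs : ∀ y ∈ frontier Ω, φs (T y) = φ y * ‖y‖ ^ 3 / r ^ 3)
    (x : EuclideanSpace ℝ (Fin 3)) (hxΩ : x ∈ frontier Ω)
    (hint1 : Integrable (fun y => (-1 / (4 * π * ‖x - y‖)) * φ y) σ)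
    (hint2 : Integrable
      (fun y => ⟪ν x, (4 * π * ‖x - y‖ ^ 3)⁻¹ • (x - y)⟫ * φ y) σ) :
    ∫ z, ⟪νs (T x), (4 * π * ‖T x - z‖ ^ 3)⁻¹ • (T x - z)⟫ * φs z ∂σs =
      (‖x‖ ^ 3 / r ^ 3) *
          ∫ y, ⟪ν x, (4 * π * ‖x - y‖ ^ 3)⁻¹ • (x - y)⟫ * φ y ∂σ
        + (‖x‖ * ⟪x, ν x⟫ / r ^ 3) *
          ∫ y, (-1 / (4 * π * ‖x - y‖)) * φ y ∂σ := by
  subst hσ hσs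
  have hΩ : MeasurableSet (frontier Ω) := isClosed_frontier.measurableSet
  have h0Ω : (0 : EuclideanSpace ℝ (Fin 3)) ∉ frontier Ω := fun h => h0 (frontier_subset_closure h)
  have hne : ∀ y ∈ frontier Ω, y ≠ 0 := fun y hy h => h0Ω (h ▸ hy)
  have hTinv : ∀ y ∈ frontier Ω, T y = inversion 0 r y := fun y hy => by
    rw [hT y (hne y hy), inversion_zero_eq_smul, div_pow]
  rw [image_congr hTinv, setIntegral_inversion_image hr.ne' zero_le_two hΩ h0Ω,
    ← integral_const_mul, ← integral_const_mul,
    ← integral_add (hint2.const_mul _) (hint1.const_mul _)]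
  refine setIntegral_congr_fun hΩ fun y hy => ?_
  have hφy : φs (inversion 0 r y) = φ y * ‖y‖ ^ 3 / r ^ 3 := hTinv y hy ▸ hφs y hy
  simp only [smul_eq_mul, dist_zero_right, Real.rpow_two]
  rw [hνs x hxΩ, hR x _ (hne x hxΩ), hTinv x hxΩ, hφy]
  exact inner_reflection_newtonKernelGrad_inversion_mul_density hr.ne' (hne x hxΩ) (hne y hy)
    (ν x) (φ y)

/-- Lemma 3.1(ii), `d = 3`: transformation of the Neumann–Poincaré operator under
inversion in a sphere centered at an exterior point `0 ∉ closure Ω`: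
`K*_{∂Ω*}[φ*](Tx) = (|x|³/r³) K*_{∂Ω}[φ](x) + (|x|(x·ν_x)/r³) S_{∂Ω}[φ](x)`,
with `Γ(z) = −1/(4π|z|)`, `∇Γ(z) = z/(4π|z|³)`, `φ*(Ty) = φ(y)|y|³/r³`,
and `ν*(Tx) = R_x ν(x)`. -/
theorem np_inversion_exterior_dim3
    (r : ℝ) (hr : 0 < r) (Ω : Set (EuclideanSpace ℝ (Fin 3)))
    (hopen : IsOpen Ω) (hbd : Bornology.IsBounded Ω)
    (h0 : (0 : EuclideanSpace ℝ (Fin 3)) ∉ closure Ω)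
    (T : EuclideanSpace ℝ (Fin 3) → EuclideanSpace ℝ (Fin 3))
    (hT : ∀ x : EuclideanSpace ℝ (Fin 3), x ≠ 0 → T x = (r ^ 2 / ‖x‖ ^ 2) • x)
    (σ σs : Measure (EuclideanSpace ℝ (Fin 3)))
    (hσ : σ = μH[2].restrict (frontier Ω))
    (hσs : σs = μH[2].restrict (T '' frontier Ω))
    (hfin : σ (frontier Ω) < ⊤)
    (R : EuclideanSpace ℝ (Fin 3) → EuclideanSpace ℝ (Fin 3) → EuclideanSpace ℝ (Fin 3))
    (hR : ∀ x v : EuclideanSpace ℝ (Fin 3), x ≠ 0 →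
      R x v = v - (2 * ⟪x, v⟫ / ‖x‖ ^ 2) • x)
    (ν νs : EuclideanSpace ℝ (Fin 3) → EuclideanSpace ℝ (Fin 3))
    (hνs : ∀ x ∈ frontier Ω, νs (T x) = R x (ν x))
    (φ : EuclideanSpace ℝ (Fin 3) → ℝ) (hφmeas : Measurable φ)
    (hφbdd : ∃ C, ∀ y, |φ y| ≤ C)
    (φs : EuclideanSpace ℝ (Fin 3) → ℝ)
    (hφs : ∀ y ∈ frontier Ω, φs (T y) = φ y * ‖y‖ ^ 3 / r ^ 3)
    (x : EuclideanSpace ℝ (Fin 3)) (hxΩ : x ∈ frontier Ω)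
    (hint1 : Integrable (fun y => (-1 / (4 * π * ‖x - y‖)) * φ y) σ)
    (hint2 : Integrable
      (fun y => ⟪ν x, (4 * π * ‖x - y‖ ^ 3)⁻¹ • (x - y)⟫ * φ y) σ) :
    ∫ z, ⟪νs (T x), (4 * π * ‖T x - z‖ ^ 3)⁻¹ • (T x - z)⟫ * φs z ∂σs =
      (‖x‖ ^ 3 / r ^ 3) *
          ∫ y, ⟪ν x, (4 * π * ‖x - y‖ ^ 3)⁻¹ • (x - y)⟫ * φ y ∂σ
        + (‖x‖ * ⟪x, ν x⟫ / r ^ 3) *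
          ∫ y, (-1 / (4 * π * ‖x - y‖)) * φ y ∂σ :=
  np_inversion_exterior_dim3_general r hr Ω h0 T hT σ σs hσ hσs R hR ν νs hνs φ φs hφs x hxΩ hint1
    hint2
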